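/- arXiv:2402.05343 — 3 statements merged into one kernel-verified Lean document; each statement's English description precedes it below -/
import Mathlib

section
/- Let 𝓡 be a reaction network on d species and suppose R = (y*_1 → y*_2, y*_2 → y*_3, …, y*_M → y*_1) is a strong tier-1 cycle along a sequence {x_n} ⊆ ℤ^d_{≥0}. Then for each m ∈ {1,…,M}, the only reaction of 𝓡 whose source complex is y*_m is y*_m → y*_{m+1} (with y*_{M+1} = y*_1). -/
open Filter Finset

/-- A reaction network on `d` species: every reaction has a nonnegative source complex and
a nonnegative product complex, and the source differs from the product. -/
def IsRN (d : ℕ) (Rn : Finset ((Fin d → ℤ) × (Fin d → ℤ))) : Prop :=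
  ∀ r ∈ Rn, (∀ i, 0 ≤ r.1 i) ∧ (∀ i, 0 ≤ r.2 i) ∧ r.1 ≠ r.2

/-- Mass-action intensity `λ_y(x) = ∏ i, x_i!/(x_i - y_i)!` if `x ≥ y` componentwise, else `0`. -/
def intensity (d : ℕ) (y x : Fin d → ℤ) : ℕ :=
  if ∀ i, y i ≤ x i then ∏ i : Fin d, Nat.descFactorial (x i).toNat ((y i).toNat) else 0

/-- Cyclic successor on `{1, …, M}`: `cyc M m = m + 1` for `m < M` and `cyc M M = 1`. -/
def cyc (M m : ℕ) : ℕ := if m = M then 1 else m + 1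

/-- `xshift d ystar x m n = x^m_n = x_n + ∑_{j=1}^{m-1} (y*_{j+1} - y*_j)`. -/
def xshift (d : ℕ) (ystar : ℕ → Fin d → ℤ) (x : ℕ → Fin d → ℤ) (m n : ℕ) : Fin d → ℤ :=
  fun i => x n i + ∑ j ∈ Finset.Ico 1 m, (ystar (j + 1) i - ystar j i)

/-- The ordered list `(y*_1 → y*_2, …, y*_M → y*_1)` consists of reactions of the network. -/
def IsCycleIn (d : ℕ) (Rn : Finset ((Fin d → ℤ) × (Fin d → ℤ))) (M : ℕ)
    (ystar : ℕ → Fin d → ℤ) : Prop :=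
  ∀ m, 1 ≤ m → m ≤ M → (ystar m, ystar (cyc M m)) ∈ Rn

/-- Condition (ii) of a strong tier-1 cycle, with explicit witness `m0`. -/
def TierLimits (d : ℕ) (Rn : Finset ((Fin d → ℤ) × (Fin d → ℤ))) (M : ℕ)
    (ystar : ℕ → Fin d → ℤ) (x : ℕ → Fin d → ℤ) (m0 : ℕ) : Prop :=
  ∀ m, 1 ≤ m → m ≤ M → ∀ y y' : Fin d → ℤ, (y, y') ∈ Rn →
    (y, y') ≠ (ystar m, ystar (cyc M m)) →
    Tendsto (fun n =>
        ((intensity d (ystar m0) (xshift d ystar x m0 n) : ℝ) *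
          (intensity d y (xshift d ystar x m n) : ℝ)) /
          (intensity d (ystar m) (xshift d ystar x m n) : ℝ))
      atTop (nhds 0)

/-- `R = (y*_1 → y*_2, …, y*_M → y*_1)` is a strong tier-1 cycle along `x`. -/
def IsStrongT1Cycle (d : ℕ) (Rn : Finset ((Fin d → ℤ) × (Fin d → ℤ))) (M : ℕ)
    (ystar : ℕ → Fin d → ℤ) (x : ℕ → Fin d → ℤ) : Prop :=
  IsCycleIn d Rn M ystar ∧
  (∀ n, 0 < intensity d (ystar 1) (x n)) ∧
  ∃ m0, 1 ≤ m0 ∧ m0 ≤ M ∧ TierLimits d Rn M ystar x m0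

/-- `y` is a source complex of the network. -/
def IsSourceIn (d : ℕ) (Rn : Finset ((Fin d → ℤ) × (Fin d → ℤ))) (y : Fin d → ℤ) : Prop :=
  ∃ y', (y, y') ∈ Rn

/-- `y` is a complex (source or product) of the network. -/
def ComplexOf (d : ℕ) (Rn : Finset ((Fin d → ℤ) × (Fin d → ℤ))) (y : Fin d → ℤ) : Prop :=
  ∃ r ∈ Rn, r.1 = y ∨ r.2 = y

/-- Tier sequence of a reaction network. -/
def IsTierSeq (d : ℕ) (Rn : Finset ((Fin d → ℤ) × (Fin d → ℤ)))
    (x : ℕ → Fin d → ℤ) : Prop :=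
  (∀ n i, 0 ≤ x n i) ∧
  (∃ i, Tendsto (fun n => x n i) atTop atTop) ∧
  (∀ i, (Tendsto (fun n => x n i) atTop atTop ∧ Monotone fun n => x n i) ∨
      (∃ c : ℤ, ∀ n, x n i = c)) ∧
  (∀ y y' : Fin d → ℤ, IsSourceIn d Rn y → IsSourceIn d Rn y' →
    (Tendsto (fun n => (intensity d y (x n) : ℝ) / (intensity d y' (x n) : ℝ)) atTop atTop ∨
      ∃ c : ℝ, Tendsto (fun n => (intensity d y (x n) : ℝ) / (intensity d y' (x n) : ℝ))
        atTop (nhds c)))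

/-- One reaction step: some reaction `y → y'` with `y ≤ a` fires, giving `b = a + y' - y`. -/
def ReactStep (d : ℕ) (Rn : Finset ((Fin d → ℤ) × (Fin d → ℤ)))
    (a b : Fin d → ℤ) : Prop :=
  ∃ r ∈ Rn, (∀ i, r.1 i ≤ a i) ∧ b = fun i => a i + (r.2 i - r.1 i)

/-- `w` is reachable from `z` by finitely many reaction steps. -/
def Reachable (d : ℕ) (Rn : Finset ((Fin d → ℤ) × (Fin d → ℤ)))
    (z w : Fin d → ℤ) : Prop :=
  Relation.ReflTransGen (ReactStep d Rn) z w

/-- Weak reversibility: every reaction lies on a directed cycle of reactions. -/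
def WeaklyReversible (d : ℕ) (Rn : Finset ((Fin d → ℤ) × (Fin d → ℤ))) : Prop :=
  ∀ r ∈ Rn, ∃ (K : ℕ) (ys : ℕ → Fin d → ℤ), 2 ≤ K ∧
    ys 1 = r.1 ∧ ys 2 = r.2 ∧
    (∀ j, 1 ≤ j → j < K → (ys j, ys (j + 1)) ∈ Rn) ∧
    (ys K, ys 1) ∈ Rn


lemma xshift_eq (d : ℕ) (ystar : ℕ → Fin d → ℤ) (x : ℕ → Fin d → ℤ) (m n : ℕ)
    (hm : 1 ≤ m) (i : Fin d) :
    xshift d ystar x m n i = x n i + ystar m i - ystar 1 i := by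
  induction m with
  | zero => omega
  | succ k ih =>
    rcases Nat.lt_or_ge 1 (k + 1) with h | h
    · have hk : 1 ≤ k := by omega
      have hs : ∑ j ∈ Finset.Ico 1 (k+1), (ystar (j+1) i - ystar j i)
          = (∑ j ∈ Finset.Ico 1 k, (ystar (j+1) i - ystar j i))
            + (ystar (k+1) i - ystar k i) := Finset.sum_Ico_succ_top hk _
      have h2 := ih hk
      simp only [xshift] at h2 ⊢
      rw [hs]
      linarith
    · have : k = 0 := by omega
      subst this
      simp [xshift]

lemma intensity_pos (d : ℕ) (y x : Fin d → ℤ) (h0 : ∀ i, 0 ≤ y i) (h : ∀ i, y i ≤ x i) :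
    0 < intensity d y x := by
  rw [intensity, if_pos h]
  apply Finset.prod_pos
  intro i _
  have := h i
  have := h0 i
  rw [Nat.pos_iff_ne_zero, Ne, Nat.descFactorial_eq_zero_iff_lt, not_lt]
  omega

lemma intensity_le (d : ℕ) (y x : Fin d → ℤ) (h : 0 < intensity d y x) :
    ∀ i, y i ≤ x i := by
  by_contra hc
  push_neg at hc
  rw [intensity, if_neg (by push_neg; exact hc)] at h
  exact lt_irrefl 0 h

/-- Proposition (result 2): along a strong tier-1 cycle, for each `m` the only reaction with
source complex `y*_m` is `y*_m → y*_{m+1}`. -/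
theorem stmt1 {d M : ℕ} (hd : 1 ≤ d) (hM : 1 ≤ M)
    (Rn : Finset ((Fin d → ℤ) × (Fin d → ℤ))) (hRn : IsRN d Rn)
    (ystar : ℕ → Fin d → ℤ) (x : ℕ → Fin d → ℤ) (hx : ∀ n i, 0 ≤ x n i)
    (hcycle : IsStrongT1Cycle d Rn M ystar x) :
    ∀ m, 1 ≤ m → m ≤ M → ∀ y' : Fin d → ℤ, (ystar m, y') ∈ Rn → y' = ystar (cyc M m) := by
  obtain ⟨hcyc, hpos, m0, hm01, hm0M, hTL⟩ := hcycle
  intro m hm1 hmM y' hy'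
  by_contra hne
  have hT := hTL m hm1 hmM (ystar m) y' hy'
    (fun h => hne (congrArg Prod.snd h))
  have hy1le : ∀ n i, ystar 1 i ≤ x n i := fun n => intensity_le d _ _ (hpos n)
  have hym0 : ∀ i, 0 ≤ ystar m0 i := (hRn _ (hcyc m0 hm01 hm0M)).1
  have hym : ∀ i, 0 ≤ ystar m i := (hRn _ (hcyc m hm1 hmM)).1
  have hposm : ∀ n, 0 < intensity d (ystar m) (xshift d ystar x m n) := by
    intro n
    apply intensity_pos _ _ _ hym
    intro i
    rw [xshift_eq d ystar x m n hm1 i]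
    linarith [hy1le n i]
  have hposm0 : ∀ n, 0 < intensity d (ystar m0) (xshift d ystar x m0 n) := by
    intro n
    apply intensity_pos _ _ _ hym0
    intro i
    rw [xshift_eq d ystar x m0 n hm01 i]
    linarith [hy1le n i]
  have key : ∀ n, (1 : ℝ) ≤
      ((intensity d (ystar m0) (xshift d ystar x m0 n) : ℝ) *
        (intensity d (ystar m) (xshift d ystar x m n) : ℝ)) /
        (intensity d (ystar m) (xshift d ystar x m n) : ℝ) := by
    intro n
    have hb : (0 : ℝ) < (intensity d (ystar m) (xshift d ystar x m n) : ℝ) := by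
      exact_mod_cast hposm n
    rw [mul_div_assoc, div_self (ne_of_gt hb), mul_one]
    exact_mod_cast hposm0 n
  have hev := hT.eventually (gt_mem_nhds (show (0:ℝ) < 1 by norm_num))
  obtain ⟨n, hn⟩ := hev.exists
  exact absurd (key n) (not_le.mpr hn)
end

section
/- Let 𝓡 be a reaction network on d species and suppose R = (y*_1 → y*_2, y*_2 → y*_3, …, y*_M → y*_1) is a strong tier-1 cycle along a sequence {x_n} ⊆ ℤ^d_{≥0}, with m_0 ∈ {1,…,M} witnessing condition (ii) of the definition. Then there exists a strictly increasing sequence of indices n_1 < n_2 < … such that for every k and every source complex y ∈ C_s with y ≠ y*_{m_0}, one has λ_y(x^{m_0}_{n_k}) = 0. -/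
open Filter Finset

/-- Proposition (result 3): along a strong tier-1 cycle with witness `m0`, there is a strictly
increasing subsequence along which `λ_y(x^{m0}_n) = 0` for every source complex `y ≠ y*_{m0}`. -/
theorem stmt2 {d M : ℕ} (hd : 1 ≤ d) (hM : 1 ≤ M)
    (Rn : Finset ((Fin d → ℤ) × (Fin d → ℤ))) (hRn : IsRN d Rn)
    (ystar : ℕ → Fin d → ℤ) (x : ℕ → Fin d → ℤ) (hx : ∀ n i, 0 ≤ x n i)
    (hmem : IsCycleIn d Rn M ystar)
    (hpos : ∀ n, 0 < intensity d (ystar 1) (x n))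
    (m0 : ℕ) (hm01 : 1 ≤ m0) (hm0M : m0 ≤ M)
    (hlim : TierLimits d Rn M ystar x m0) :
    ∃ φ : ℕ → ℕ, StrictMono φ ∧
      ∀ k, ∀ y : Fin d → ℤ, IsSourceIn d Rn y → y ≠ ystar m0 →
        intensity d y (xshift d ystar x m0 (φ k)) = 0 := by
  -- Telescoping: the shift equals `x n + (ystar m0 - ystar 1)`.
  have hshift : ∀ n i, xshift d ystar x m0 n i = x n i + (ystar m0 i - ystar 1 i) := by
    intro n i
    unfold xshift
    congr 1
    have tel : ∀ m : ℕ, 1 ≤ m →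
        ∑ j ∈ Finset.Ico 1 m, (ystar (j + 1) i - ystar j i) = ystar m i - ystar 1 i := by
      intro m hm
      induction m with
      | zero => omega
      | succ k ih =>
        rcases Nat.eq_or_lt_of_le hm with h1 | h1
        · rw [← h1]; simp
        · have hk : 1 ≤ k := by omega
          rw [Finset.sum_Ico_succ_top hk, ih hk]
          ring
    exact tel m0 hm01
  -- Positivity of the source intensity along the shifted sequence.
  have hposm0 : ∀ n, 0 < intensity d (ystar m0) (xshift d ystar x m0 n) := by
    intro n
    have h1 := hpos n
    unfold intensity at h1 ⊢
    by_cases hc : ∀ i, ystar 1 i ≤ x n i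
    · have hc' : ∀ i, ystar m0 i ≤ xshift d ystar x m0 n i := by
        intro i; rw [hshift]; linarith [hc i]
      rw [if_pos hc']
      apply Finset.prod_pos
      intro i _
      rw [Nat.pos_iff_ne_zero, Ne, Nat.descFactorial_eq_zero_iff_lt, not_lt]
      exact Int.toNat_le_toNat (hc' i)
    · rw [if_neg hc] at h1; exact absurd h1 (lt_irrefl 0)
  -- For every reaction with source `≠ ystar m0`, the intensity is eventually zero.
  have key : ∀ r ∈ Rn, r.1 ≠ ystar m0 →
      ∀ᶠ n in atTop, intensity d r.1 (xshift d ystar x m0 n) = 0 := by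
    intro r hr hne
    have hlim' := hlim m0 hm01 hm0M r.1 r.2 (by simpa using hr)
      (by intro h; exact hne (congrArg Prod.fst h))
    have heq : (fun n => ((intensity d (ystar m0) (xshift d ystar x m0 n) : ℝ) *
          (intensity d r.1 (xshift d ystar x m0 n) : ℝ)) /
          (intensity d (ystar m0) (xshift d ystar x m0 n) : ℝ))
        = fun n => (intensity d r.1 (xshift d ystar x m0 n) : ℝ) := by
      funext n
      have hne0 : (intensity d (ystar m0) (xshift d ystar x m0 n) : ℝ) ≠ 0 := by
        exact_mod_cast (hposm0 n).ne'
      rw [mul_comm, mul_div_assoc, div_self hne0, mul_one]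
    rw [heq] at hlim'
    have hev := hlim'.eventually (gt_mem_nhds (by norm_num : (0:ℝ) < 1))
    filter_upwards [hev] with n hn
    have : intensity d r.1 (xshift d ystar x m0 n) < 1 := by exact_mod_cast hn
    omega
  have hall : ∀ᶠ n in atTop, ∀ r ∈ Rn, r.1 ≠ ystar m0 →
      intensity d r.1 (xshift d ystar x m0 n) = 0 := by
    rw [eventually_all_finset]
    intro r hr
    by_cases hne : r.1 = ystar m0
    · filter_upwards with n h; exact absurd hne h
    · filter_upwards [key r hr hne] with n h _; exact h
  obtain ⟨N, hN⟩ := eventually_atTop.mp hall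
  refine ⟨fun k => N + k, fun a b h => Nat.add_lt_add_left h N, ?_⟩
  intro k y hy hne
  obtain ⟨y', hy'⟩ := hy
  exact hN (N + k) (Nat.le_add_right N k) (y, y') hy' hne
end

section
/- Let 𝓡 be a reaction network on 2 species containing the reactions y*_1 → y*_2, …, y*_{M−1} → y*_M, y*_M → y*_1, with complex set C (sources and products of 𝓡). Assume: (1) {y*_1,…,y*_M} can be enumerated as ȳ_1 < ȳ_2 < … < ȳ_M in the componentwise strict order; (2) there exists i_1 ∈ {1,2} such that (ȳ_m)_{i_1} < (ȳ_{m'})_{i_1} − (ȳ_1)_{i_1} for all 1 ≤ m < m' ≤ M; (3) for each m ∈ {1,…,M}, the only reaction of 𝓡 with source complex y*_m is y*_m → y*_{m+1} (with y*_{M+1} = y*_1); (4) letting i_2 ∈ {1,2} with i_2 ≠ i_1 and letting f : ℤ_{≥0} → ℤ_{≥0} be defined by f(ℓ) = 0 for ℓ < (ȳ_1)_{i_1}, f(ℓ) = (ȳ_m)_{i_2} for (ȳ_m)_{i_1} ≤ ℓ < (ȳ_{m+1})_{i_1} (1 ≤ m ≤ M−1), and f(ℓ) = (ȳ_M)_{i_2}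 for ℓ ≥ (ȳ_M)_{i_1}, every complex y ∈ C \ {ȳ_1,…,ȳ_M} satisfies f((y)_{i_1} + (ȳ_1)_{i_1}) < (y)_{i_2}. Then the sequence {x_n}_{n≥1} defined by (x_n)_{i_1} = n + (y*_1)_{i_1} and (x_n)_{i_2} = (y*_1)_{i_2} is a tier sequence of 𝓡, and R = (y*_1 → y*_2, …, y*_M → y*_1) is a strong tier-1 cycle along {x_n}. -/
open Filter Finset

/-!
Along `x_n = y*_1 + (n + 1) e_{i₁}`, and along each shifted sequence
`x^m_n = y*_m + (n + 1) e_{i₁}`, an intensity `λ_y` is eventually a polynomial in `n` of degree `y_{i₁}`, whose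
nonnegative leading coefficient vanishes exactly when `y` exceeds the base point in another
species. Ratios of intensities are thus ratios of polynomials and converge in `[0, ∞]`, and the
strong tier-1 limits reduce to the degree inequality `(ȳ₁)_{i₁} + y_{i₁} < (y*_m)_{i₁}` for every
source `y ≠ y*_m` with `y_{i₂} ≤ (y*_m)_{i₂}`. Writing `y*_m = ȳ_k`, such a `y` is either some
`ȳ_j` with `j < k`, where the gap condition applies, or lies strictly above the staircase `f`,
which is at least `(ȳ_k)_{i₂}` from `(ȳ_k)_{i₁}` on.
-/

open Polynomial Function

theorem Polynomial.div_tendsto_atTop_or_nhds (P Q : ℝ[X])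
    (hnng : 0 ≤ P.leadingCoeff / Q.leadingCoeff) :
    Tendsto (fun x => eval x P / eval x Q) atTop atTop ∨
      ∃ c, Tendsto (fun x => eval x P / eval x Q) atTop (nhds c) := by
  by_cases hQ : Q = 0
  · exact Or.inr ⟨0, by simp [hQ]⟩
  rcases lt_or_ge Q.degree P.degree with h | h
  · exact Or.inl (div_tendsto_atTop_of_degree_gt P Q h hQ hnng)
  rcases h.lt_or_eq with h | h
  · exact Or.inr ⟨0, div_tendsto_atTop_zero_of_degree_lt P Q h⟩
  · exact Or.inr ⟨_, div_tendsto_atTop_leadingCoeff_div_of_degree_eq P Q h⟩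

section Ray

variable {d : ℕ}

def ray (w : Fin d → ℤ) (i1 : Fin d) (n : ℕ) : Fin d → ℤ :=
  fun i => if i = i1 then ((n : ℤ) + 1) + w i else w i

theorem intensity_pos_iff {y x : Fin d → ℤ} : 0 < intensity d y x ↔ ∀ i, y i ≤ x i := by
  unfold intensity
  split_ifs with h
  · exact iff_of_true
      (Finset.prod_pos fun i _ => Nat.descFactorial_pos.2 (Int.toNat_le_toNat (h i))) h
  · exact iff_of_false (lt_irrefl 0) h

theorem intensity_update_pos_iff {y w : Fin d → ℤ} {i1 : Fin d} :
    0 < intensity d (update y i1 0) (update w i1 0) ↔ ∀ i ≠ i1, y i ≤ w i := by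
  rw [intensity_pos_iff]
  refine forall_congr' fun i => ?_
  by_cases hi : i = i1 <;> simp [hi]

theorem intensity_ray_self_pos (w : Fin d → ℤ) (i1 : Fin d) (n : ℕ) :
    0 < intensity d w (ray w i1 n) :=
  intensity_pos_iff.2 fun i => by unfold ray; split_ifs <;> omega

-- `update _ i1 0` deletes species `i1`: the second factor is the intensity of the other species.
theorem intensity_ray {y w : Fin d → ℤ} {i1 : Fin d} (hw : 0 ≤ w i1) {n : ℕ}
    (hn : (y i1).toNat ≤ n) :
    intensity d y (ray w i1 n) = (n + 1 + (w i1).toNat).descFactorial (y i1).toNat *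
      intensity d (update y i1 0) (update w i1 0) := by
  have hle : (∀ i, y i ≤ ray w i1 n i) ↔ ∀ i, update y i1 0 i ≤ update w i1 0 i := by
    refine forall_congr' fun i => ?_
    by_cases hi : i = i1
    · subst hi
      simp only [ray, if_pos, update_self]
      omega
    · simp [ray, hi]
  unfold intensity
  by_cases h : ∀ i, update y i1 0 i ≤ update w i1 0 i
  · rw [if_pos (hle.2 h), if_pos h, Fintype.prod_eq_mul_prod_compl i1,
      Fintype.prod_eq_mul_prod_compl i1 (fun i => ((update w i1 0) i).toNat.descFactorial _)]
    simp only [ray, if_pos, update_self, Int.toNat_zero, Nat.descFactorial_zero, one_mul]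
    congr 1
    · congr 1
      omega
    · refine Finset.prod_congr rfl fun i hi => ?_
      have hi : i ≠ i1 := by simpa using hi
      simp [hi]
  · rw [if_neg (mt hle.1 h), if_neg h, mul_zero]

theorem xshift_ray (ystar : ℕ → Fin d → ℤ) (i1 : Fin d) {m : ℕ} (hm : 1 ≤ m) (n : ℕ) :
    xshift d ystar (ray (ystar 1) i1) m n = ray (ystar m) i1 n := by
  funext i
  simp only [xshift, ray, Finset.sum_Ico_sub (fun j => ystar j i) hm]
  split_ifs <;> ring

noncomputable def rayPoly (y w : Fin d → ℤ) (i1 : Fin d) : ℝ[X] :=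
  C (intensity d (update y i1 0) (update w i1 0) : ℝ) *
    (descPochhammer ℝ (y i1).toNat).comp (X + C ((w i1).toNat + 1 : ℝ))

theorem rayPoly_leadingCoeff (y w : Fin d → ℤ) (i1 : Fin d) :
    (rayPoly y w i1).leadingCoeff = intensity d (update y i1 0) (update w i1 0) := by
  rw [rayPoly, leadingCoeff_mul, leadingCoeff_C,
    ((monic_descPochhammer ℝ _).comp_X_add_C _).leadingCoeff, mul_one]

theorem rayPoly_natDegree {y w : Fin d → ℤ} {i1 : Fin d} (h : ∀ i ≠ i1, y i ≤ w i) :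
    (rayPoly y w i1).natDegree = (y i1).toNat := by
  have hc : (intensity d (update y i1 0) (update w i1 0) : ℝ) ≠ 0 :=
    Nat.cast_ne_zero.2 (intensity_update_pos_iff.2 h).ne'
  rw [rayPoly, natDegree_C_mul hc, natDegree_comp, descPochhammer_natDegree, natDegree_X_add_C,
    mul_one]

theorem intensity_ray_eventuallyEq_rayPoly (y : Fin d → ℤ) {w : Fin d → ℤ} {i1 : Fin d}
    (hw : 0 ≤ w i1) :
    (fun n : ℕ => (intensity d y (ray w i1 n) : ℝ)) =ᶠ[atTop]
      fun n => (rayPoly y w i1).eval (n : ℝ) := by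
  filter_upwards [eventually_ge_atTop (y i1).toNat] with n hn
  rw [intensity_ray hw hn, rayPoly, eval_mul, eval_C, eval_comp, eval_add, eval_X, eval_C,
    show (n : ℝ) + ((w i1).toNat + 1) = ((n + 1 + (w i1).toNat : ℕ) : ℝ) by push_cast; ring,
    descPochhammer_eval_eq_descFactorial]
  push_cast
  ring

theorem isTierSeq_ray (Rn : Finset ((Fin d → ℤ) × (Fin d → ℤ))) {w : Fin d → ℤ}
    (hw : ∀ i, 0 ≤ w i) (i1 : Fin d) : IsTierSeq d Rn (ray w i1) := by
  have hgrow : Tendsto (fun n => ray w i1 n i1) atTop atTop := by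
    simp only [ray, if_pos]
    exact tendsto_atTop_add_const_right _ _
      (tendsto_atTop_add_const_right _ _ tendsto_natCast_atTop_atTop)
  refine ⟨fun n i => ?_, ⟨i1, hgrow⟩, fun i => ?_, fun y y' _ _ => ?_⟩
  · have := hw i
    unfold ray
    split_ifs <;> omega
  · by_cases hi : i = i1
    · subst hi
      refine Or.inl ⟨hgrow, fun a b hab => ?_⟩
      have : (a : ℤ) ≤ b := by exact_mod_cast hab
      simp only [ray, if_pos]
      omega
    · exact Or.inr ⟨w i, fun n => if_neg hi⟩
  have hratio := ((intensity_ray_eventuallyEq_rayPoly y (hw i1)).div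
    (intensity_ray_eventuallyEq_rayPoly y' (hw i1))).symm
  rcases (rayPoly y w i1).div_tendsto_atTop_or_nhds (rayPoly y' w i1)
    (by rw [rayPoly_leadingCoeff, rayPoly_leadingCoeff]; positivity) with h | ⟨c, h⟩
  · exact Or.inl ((h.comp tendsto_natCast_atTop_atTop).congr' hratio)
  · exact Or.inr ⟨c, (h.comp tendsto_natCast_atTop_atTop).congr' hratio⟩

theorem tendsto_intensity_ray_mul_div {v y w : Fin d → ℤ} {i1 : Fin d} (hv : 0 ≤ v i1)
    (hy : 0 ≤ y i1) (hw : 0 ≤ w i1) (hdeg : (∀ i ≠ i1, y i ≤ w i) → v i1 + y i1 < w i1) :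
    Tendsto (fun n => (intensity d v (ray v i1 n) : ℝ) * intensity d y (ray w i1 n) /
      intensity d w (ray w i1 n)) atTop (nhds 0) := by
  have hself : ∀ u : Fin d → ℤ, ∀ i ≠ i1, u i ≤ u i := fun _ _ _ => le_rfl
  have hw0 : rayPoly w w i1 ≠ 0 := by
    rw [← leadingCoeff_ne_zero, rayPoly_leadingCoeff]
    exact Nat.cast_ne_zero.2 (intensity_update_pos_iff.2 (hself w)).ne'
  have hlt : (rayPoly v v i1 * rayPoly y w i1).degree < (rayPoly w w i1).degree := by
    by_cases hyw : ∀ i ≠ i1, y i ≤ w i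
    · refine degree_lt_degree ?_
      rw [natDegree_mul', rayPoly_natDegree hyw, rayPoly_natDegree (hself v),
        rayPoly_natDegree (hself w)]
      · have := hdeg hyw
        omega
      · rw [rayPoly_leadingCoeff, rayPoly_leadingCoeff]
        exact_mod_cast (Nat.mul_pos (intensity_update_pos_iff.2 (hself v))
          (intensity_update_pos_iff.2 hyw)).ne'
    · have hy0 : rayPoly y w i1 = 0 := by
        rw [← leadingCoeff_eq_zero, rayPoly_leadingCoeff, Nat.cast_eq_zero]
        exact Nat.eq_zero_of_not_pos (mt intensity_update_pos_iff.1 hyw)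
      rw [hy0, mul_zero, degree_zero, bot_lt_iff_ne_bot, Ne, degree_eq_bot]
      exact hw0
  refine ((div_tendsto_atTop_zero_of_degree_lt _ _ hlt).comp tendsto_natCast_atTop_atTop).congr' ?_
  filter_upwards [intensity_ray_eventuallyEq_rayPoly v hv, intensity_ray_eventuallyEq_rayPoly y hw,
    intensity_ray_eventuallyEq_rayPoly w hw] with n hvn hyn hwn
  simp only [comp_apply, eval_mul, hvn, hyn, hwn]

end Ray

theorem le_stair_of_le {M : ℕ} {a b : ℕ → ℤ} {f : ℤ → ℤ}
    (hb : ∀ m, 1 ≤ m → m < M → b m < b (m + 1))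
    (hfm : ∀ m, 1 ≤ m → m ≤ M - 1 → ∀ ℓ, a m ≤ ℓ → ℓ < a (m + 1) → f ℓ = b m)
    (hfM : ∀ ℓ, a M ≤ ℓ → f ℓ = b M) {k : ℕ} (hk : 1 ≤ k) (hkM : k ≤ M) :
    ∀ ℓ, a k ≤ ℓ → b k ≤ f ℓ := by
  refine Nat.decreasingInduction' (P := fun j => ∀ ℓ, a j ≤ ℓ → b j ≤ f ℓ)
    (fun j hjM hkj ih ℓ hℓ => ?_) hkM fun ℓ hℓ => (hfM ℓ hℓ).ge
  by_cases hℓj : ℓ < a (j + 1)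
  · exact (hfm j (hk.trans hkj) (by omega) ℓ hℓ hℓj).ge
  · exact (hb j (hk.trans hkj) hjM).le.trans (ih ℓ (not_lt.1 hℓj))

theorem ComplexOf.add_lt_of_le {M : ℕ} {Rn : Finset ((Fin 2 → ℤ) × (Fin 2 → ℤ))}
    {ybar : ℕ → Fin 2 → ℤ} {i1 i2 : Fin 2} {f : ℤ → ℤ}
    (hord : ∀ m, 1 ≤ m → m < M → ∀ i, ybar m i < ybar (m + 1) i)
    (hgap : ∀ m m', 1 ≤ m → m < m' → m' ≤ M → ybar m i1 < ybar m' i1 - ybar 1 i1)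
    (hfm : ∀ m, 1 ≤ m → m ≤ M - 1 → ∀ ℓ, ybar m i1 ≤ ℓ → ℓ < ybar (m + 1) i1 →
      f ℓ = ybar m i2)
    (hfM : ∀ ℓ, ybar M i1 ≤ ℓ → f ℓ = ybar M i2)
    (hcomp : ∀ y : Fin 2 → ℤ, ComplexOf 2 Rn y → (∀ k, 1 ≤ k → k ≤ M → y ≠ ybar k) →
      f (y i1 + ybar 1 i1) < y i2)
    {y : Fin 2 → ℤ} (hy : ComplexOf 2 Rn y) {k : ℕ} (hk : 1 ≤ k) (hkM : k ≤ M)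
    (hne : y ≠ ybar k) (hle : y i2 ≤ ybar k i2) :
    y i1 + ybar 1 i1 < ybar k i1 := by
  by_cases hbar : ∃ j, 1 ≤ j ∧ j ≤ M ∧ y = ybar j
  · obtain ⟨j, hj, hjM, rfl⟩ := hbar
    rcases lt_trichotomy j k with hjk | rfl | hkj
    · linarith [hgap j k hj hjk hkM]
    · exact absurd rfl hne
    · have hmono : StrictMonoOn (fun m => ybar m i2) (Set.Icc 1 M) :=
        strictMonoOn_of_lt_add_one Set.ordConnected_Icc fun m _ hm hm1 =>
          hord m hm.1 hm1.2 i2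
      exact absurd hle (not_le.2 (hmono ⟨hk, hkM⟩ ⟨hj, hjM⟩ hkj))
  · push Not at hbar
    by_contra! hge
    have := le_stair_of_le (a := fun m => ybar m i1) (b := fun m => ybar m i2)
      (fun m hm hmM => hord m hm hmM i2) hfm hfM hk hkM _ hge
    linarith [hcomp y hy hbar]

theorem stmt8_general {M : ℕ} (hM : 1 ≤ M)
    (Rn : Finset ((Fin 2 → ℤ) × (Fin 2 → ℤ))) (hRn : IsRN 2 Rn)
    (ystar ybar : ℕ → Fin 2 → ℤ) (hmem : IsCycleIn 2 Rn M ystar)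
    (hset : ∀ y : Fin 2 → ℤ,
      (∃ m, 1 ≤ m ∧ m ≤ M ∧ ystar m = y) ↔ (∃ k, 1 ≤ k ∧ k ≤ M ∧ ybar k = y))
    (hord : ∀ m, 1 ≤ m → m < M → ∀ i, ybar m i < ybar (m + 1) i)
    (i1 i2 : Fin 2) (hne : i2 ≠ i1)
    (hgap : ∀ m m', 1 ≤ m → m < m' → m' ≤ M → ybar m i1 < ybar m' i1 - ybar 1 i1)
    (honly : ∀ m, 1 ≤ m → m ≤ M → ∀ y' : Fin 2 → ℤ, (ystar m, y') ∈ Rn →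
      y' = ystar (cyc M m))
    (f : ℤ → ℤ)
    (hfm : ∀ m, 1 ≤ m → m ≤ M - 1 → ∀ ℓ, ybar m i1 ≤ ℓ → ℓ < ybar (m + 1) i1 →
      f ℓ = ybar m i2)
    (hfM : ∀ ℓ, ybar M i1 ≤ ℓ → f ℓ = ybar M i2)
    (hcomp : ∀ y : Fin 2 → ℤ, ComplexOf 2 Rn y → (∀ k, 1 ≤ k → k ≤ M → y ≠ ybar k) →
      f (y i1 + ybar 1 i1) < y i2) :
    IsTierSeq 2 Rn
      (fun n i => if i = i1 then ((n : ℤ) + 1) + ystar 1 i else ystar 1 i) ∧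
    IsStrongT1Cycle 2 Rn M ystar
      (fun n i => if i = i1 then ((n : ℤ) + 1) + ystar 1 i else ystar 1 i) := by
  have hnn : ∀ m, 1 ≤ m → m ≤ M → ∀ i, 0 ≤ ystar m i := fun m hm hmM => (hRn _ (hmem m hm hmM)).1
  change IsTierSeq 2 Rn (ray (ystar 1) i1) ∧ IsStrongT1Cycle 2 Rn M ystar (ray (ystar 1) i1)
  obtain ⟨m0, hm0, hm0M, hm0_eq⟩ := (hset (ybar 1)).2 ⟨1, le_rfl, hM, rfl⟩
  refine ⟨isTierSeq_ray Rn (hnn 1 le_rfl hM) i1, hmem, intensity_ray_self_pos _ i1, m0, hm0,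
    hm0M, fun m hm hmM y y' hyy' hcyc => ?_⟩
  obtain ⟨k, hk, hkM, hk_eq⟩ := (hset (ystar m)).1 ⟨m, hm, hmM, rfl⟩
  have hy_ne : y ≠ ybar k := by
    rintro rfl
    exact hcyc (by rw [hk_eq, honly m hm hmM y' (hk_eq ▸ hyy')])
  simp only [xshift_ray ystar i1 hm0, xshift_ray ystar i1 hm]
  refine tendsto_intensity_ray_mul_div (hnn m0 hm0 hm0M i1) ((hRn _ hyy').1 i1)
    (hnn m hm hmM i1) fun hle => ?_
  rw [hm0_eq, ← hk_eq, add_comm]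
  exact ComplexOf.add_lt_of_le hord hgap hfm hfM hcomp ⟨_, hyy', Or.inl rfl⟩ hk hkM hy_ne
    (hk_eq ▸ hle i2 hne)

/-- Corollary 3 (structural part): a two-species network containing the cycle, with the gap
condition and condition on the extra complexes via `f`, gives a tier sequence along which
`R` is a strong tier-1 cycle. -/
theorem stmt8 {M : ℕ} (hM : 1 ≤ M)
    (Rn : Finset ((Fin 2 → ℤ) × (Fin 2 → ℤ))) (hRn : IsRN 2 Rn)
    (ystar ybar : ℕ → Fin 2 → ℤ) (hmem : IsCycleIn 2 Rn M ystar)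
    (hset : ∀ y : Fin 2 → ℤ,
      (∃ m, 1 ≤ m ∧ m ≤ M ∧ ystar m = y) ↔ (∃ k, 1 ≤ k ∧ k ≤ M ∧ ybar k = y))
    (hord : ∀ m, 1 ≤ m → m < M → ∀ i, ybar m i < ybar (m + 1) i)
    (i1 i2 : Fin 2) (hne : i2 ≠ i1)
    (hgap : ∀ m m', 1 ≤ m → m < m' → m' ≤ M → ybar m i1 < ybar m' i1 - ybar 1 i1)
    (honly : ∀ m, 1 ≤ m → m ≤ M → ∀ y' : Fin 2 → ℤ, (ystar m, y') ∈ Rn →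
      y' = ystar (cyc M m))
    (f : ℤ → ℤ)
    (hf0 : ∀ ℓ, 0 ≤ ℓ → ℓ < ybar 1 i1 → f ℓ = 0)
    (hfm : ∀ m, 1 ≤ m → m ≤ M - 1 → ∀ ℓ, ybar m i1 ≤ ℓ → ℓ < ybar (m + 1) i1 →
      f ℓ = ybar m i2)
    (hfM : ∀ ℓ, ybar M i1 ≤ ℓ → f ℓ = ybar M i2)
    (hcomp : ∀ y : Fin 2 → ℤ, ComplexOf 2 Rn y → (∀ k, 1 ≤ k → k ≤ M → y ≠ ybar k) →
      f (y i1 + ybar 1 i1) < y i2) :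
    IsTierSeq 2 Rn
      (fun n i => if i = i1 then ((n : ℤ) + 1) + ystar 1 i else ystar 1 i) ∧
    IsStrongT1Cycle 2 Rn M ystar
      (fun n i => if i = i1 then ((n : ℤ) + 1) + ystar 1 i else ystar 1 i) :=
  stmt8_general hM Rn hRn ystar ybar hmem hset hord i1 i2 hne hgap honly f hfm hfM hcomp
end
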